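/- arXiv:1603.06088 — 3 statements merged into one kernel-verified Lean document; each statement's English description precedes it below -/
import Mathlib

section
/- Let E ⊆ ℝⁿ be a measurable set with locally finite s-perimeter for some s ∈ (0,1), and let Ω ⊆ ℝⁿ be a connected open set. If ∂⁻E ∩ Ω = ∅, then P_s^L(E,Ω) = 0. Consequently, for connected open Ω one has P_s^L(E,Ω) > 0 if and only if ∂⁻E ∩ Ω ≠ ∅. -/
/-!
Away from `∂⁻E` every point has a ball in which `E` or `Eᶜ` is null. Points of these two kinds
form disjoint open sets, so a connected `Ω` missing `∂⁻E` lies in one of them; then `E ∩ Ω` or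
`Eᶜ ∩ Ω` is null and `P_s^L(E,Ω) = 0`. Conversely, a point of `∂⁻E ∩ Ω` has a ball inside `Ω`
meeting both `E` and `Eᶜ` in positive measure, and the kernel is positive off the diagonal.
-/

open MeasureTheory Metric Set Filter Bornology
open scoped ENNReal Topology

/-- The fractional kernel `|x-y|^{-(n+s)}` as an extended nonnegative real. -/
noncomputable def fracKer (n : ℕ) (s : ℝ) (x y : EuclideanSpace ℝ (Fin n)) : ℝ≥0∞ :=
  ENNReal.ofReal (‖x - y‖ ^ (-((n : ℝ) + s)))

/-- The interaction `L_s(A,B) = ∫_A ∫_B |x-y|^{-(n+s)} dy dx`. -/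
noncomputable def interL (n : ℕ) (s : ℝ) (A B : Set (EuclideanSpace ℝ (Fin n))) : ℝ≥0∞ :=
  ∫⁻ x in A, ∫⁻ y in B, fracKer n s x y

/-- The local part of the `s`-fractional perimeter of `E` in `Ω`. -/
noncomputable def perL (n : ℕ) (s : ℝ) (E Ω : Set (EuclideanSpace ℝ (Fin n))) : ℝ≥0∞ :=
  interL n s (E ∩ Ω) (Eᶜ ∩ Ω)

/-- The nonlocal part of the `s`-fractional perimeter of `E` in `Ω`. -/
noncomputable def perNL (n : ℕ) (s : ℝ) (E Ω : Set (EuclideanSpace ℝ (Fin n))) : ℝ≥0∞ :=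
  interL n s (E ∩ Ω) (Eᶜ \ Ω) + interL n s (E \ Ω) (Eᶜ ∩ Ω)

/-- The `s`-fractional perimeter of `E` in `Ω`. -/
noncomputable def per (n : ℕ) (s : ℝ) (E Ω : Set (EuclideanSpace ℝ (Fin n))) : ℝ≥0∞ :=
  interL n s (E ∩ Ω) (Eᶜ ∩ Ω) + interL n s (E ∩ Ω) (Eᶜ \ Ω) + interL n s (E \ Ω) (Eᶜ ∩ Ω)

/-- The global `s`-fractional perimeter `P_s(E) = L_s(E, Eᶜ)`. -/
noncomputable def perG (n : ℕ) (s : ℝ) (E : Set (EuclideanSpace ℝ (Fin n))) : ℝ≥0∞ :=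
  interL n s E Eᶜ

/-- The measure theoretic boundary `∂⁻E`. Note `volume (ball x r) = ω_n rⁿ`. -/
def mtb (n : ℕ) (E : Set (EuclideanSpace ℝ (Fin n))) : Set (EuclideanSpace ℝ (Fin n)) :=
  {x | ∀ r > (0 : ℝ), 0 < volume (E ∩ ball x r) ∧ volume (E ∩ ball x r) < volume (ball x r)}

/-- `E` has locally finite `s`-perimeter: finite `s`-perimeter in every bounded open set. -/
def locFinPer (n : ℕ) (s : ℝ) (E : Set (EuclideanSpace ℝ (Fin n))) : Prop :=
  ∀ Ω : Set (EuclideanSpace ℝ (Fin n)), IsOpen Ω → IsBounded Ω → per n s E Ω < ⊤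

section LocallyNull

variable {X : Type*} [PseudoMetricSpace X] [MeasurableSpace X] (μ : Measure X)

def locallyNullSet (F : Set X) : Set X :=
  {x | ∃ r > 0, μ (F ∩ ball x r) = 0}

variable {μ}

theorem isOpen_locallyNullSet (F : Set X) : IsOpen (locallyNullSet μ F) := by
  refine Metric.isOpen_iff.mpr fun x ⟨r, hr, hnull⟩ => ⟨r / 2, by positivity, fun y hy => ?_⟩
  refine ⟨r / 2, by positivity, measure_mono_null (inter_subset_inter_right F fun z hz => ?_) hnull⟩
  rw [mem_ball] at hy hz ⊢
  linarith [dist_triangle z y x]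

theorem disjoint_locallyNullSet_compl [μ.IsOpenPosMeasure] (F : Set X) :
    Disjoint (locallyNullSet μ F) (locallyNullSet μ Fᶜ) := by
  refine disjoint_left.mpr fun x ⟨r₁, hr₁, h₁⟩ ⟨r₂, hr₂, h₂⟩ => ?_
  have hcover : ball x (min r₁ r₂) ⊆ (F ∩ ball x r₁) ∪ (Fᶜ ∩ ball x r₂) := fun z hz => by
    by_cases hzF : z ∈ F
    · exact Or.inl ⟨hzF, ball_subset_ball (min_le_left _ _) hz⟩
    · exact Or.inr ⟨hzF, ball_subset_ball (min_le_right _ _) hz⟩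
  exact (measure_ball_pos μ x (lt_min hr₁ hr₂)).ne'
    (measure_mono_null hcover (measure_union_null h₁ h₂))

theorem measure_inter_eq_zero_of_subset_locallyNullSet [SecondCountableTopology X]
    {F Ω : Set X} (h : Ω ⊆ locallyNullSet μ F) : μ (F ∩ Ω) = 0 := by
  refine measure_null_of_locally_null _ fun x hx => ?_
  obtain ⟨r, hr, hnull⟩ := h hx.2
  exact ⟨F ∩ ball x r, mem_nhdsWithin.mpr ⟨ball x r, isOpen_ball, mem_ball_self hr,
    fun z hz => ⟨hz.2.1, hz.1⟩⟩, hnull⟩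

end LocallyNull

theorem measure_inter_lt_iff_measure_compl_inter_pos {X : Type*} [MeasurableSpace X]
    {μ : Measure X} {E B : Set X} (hE : MeasurableSet E) (hB : μ B ≠ ∞) :
    μ (E ∩ B) < μ B ↔ 0 < μ (Eᶜ ∩ B) := by
  have hsplit : μ (E ∩ B) + μ (Eᶜ ∩ B) = μ B := by
    rw [inter_comm E, inter_comm Eᶜ, ← sdiff_eq]
    exact measure_inter_add_sdiff B hE
  have hfin : μ (E ∩ B) ≠ ∞ := ne_top_of_le_ne_top hB (measure_mono inter_subset_right)
  rw [← hsplit]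
  refine ⟨fun h => pos_iff_ne_zero.mpr fun h0 => ?_, fun h => ENNReal.lt_add_right hfin h.ne'⟩
  simp [h0] at h

section Interaction

variable {n : ℕ} {s : ℝ}

theorem measurable_fracKer : Measurable (Function.uncurry (fracKer n s)) := by
  unfold fracKer
  fun_prop

theorem fracKer_pos {x y : EuclideanSpace ℝ (Fin n)} (hxy : x ≠ y) : 0 < fracKer n s x y :=
  ENNReal.ofReal_pos.mpr (Real.rpow_pos_of_pos (norm_pos_iff.mpr (sub_ne_zero.mpr hxy)) _)

theorem interL_mono {A A' B B' : Set (EuclideanSpace ℝ (Fin n))} (hA : A ⊆ A') (hB : B ⊆ B') :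
    interL n s A B ≤ interL n s A' B' :=
  lintegral_mono' (Measure.restrict_mono hA le_rfl) fun _ =>
    lintegral_mono' (Measure.restrict_mono hB le_rfl) fun _ => le_rfl

theorem interL_eq_zero_of_measure_left {A B : Set (EuclideanSpace ℝ (Fin n))}
    (hA : volume A = 0) : interL n s A B = 0 := by
  rw [interL, Measure.restrict_eq_zero.mpr hA, lintegral_zero_measure]

theorem interL_eq_zero_of_measure_right {A B : Set (EuclideanSpace ℝ (Fin n))}
    (hB : volume B = 0) : interL n s A B = 0 := by
  simp [interL, Measure.restrict_eq_zero.mpr hB]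

theorem interL_pos {A B : Set (EuclideanSpace ℝ (Fin n))} (hAB : Disjoint A B)
    (hA₀ : 0 < volume A) (hB₀ : 0 < volume B) : 0 < interL n s A B := by
  have hinner : Measurable fun x => ∫⁻ y in B, fracKer n s x y :=
    Measurable.lintegral_prod_right (f := fracKer n s) measurable_fracKer
  have hpos : ∀ x ∈ A, 0 < ∫⁻ y in B, fracKer n s x y := fun x hx => by
    rw [setLIntegral_pos_iff measurable_fracKer.of_uncurry_left]
    exact hB₀.trans_le (measure_mono fun y hy => ⟨(fracKer_pos (hAB.ne_of_mem hx hy)).ne', hy⟩)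
  rw [interL, setLIntegral_pos_iff hinner]
  exact hA₀.trans_le (measure_mono fun x hx => ⟨(hpos x hx).ne', hx⟩)

end Interaction

section MeasureTheoreticBoundary

variable {n : ℕ} {s : ℝ} {E : Set (EuclideanSpace ℝ (Fin n))}

theorem mem_mtb_iff (hE : MeasurableSet E) {x : EuclideanSpace ℝ (Fin n)} :
    x ∈ mtb n E ↔ ∀ r > 0, 0 < volume (E ∩ ball x r) ∧ 0 < volume (Eᶜ ∩ ball x r) := by
  simp only [mtb, mem_ofPred_eq,
    measure_inter_lt_iff_measure_compl_inter_pos hE measure_ball_lt_top.ne]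

theorem compl_mtb_subset_locallyNullSet_union (hE : MeasurableSet E) :
    (mtb n E)ᶜ ⊆ locallyNullSet volume E ∪ locallyNullSet volume Eᶜ := by
  intro x hx
  rw [mem_compl_iff, mem_mtb_iff hE] at hx
  push Not at hx
  obtain ⟨r, hr, hnull⟩ := hx
  by_cases hE₀ : 0 < volume (E ∩ ball x r)
  · exact Or.inr ⟨r, hr, nonpos_iff_eq_zero.mp (hnull hE₀)⟩
  · exact Or.inl ⟨r, hr, nonpos_iff_eq_zero.mp (not_lt.mp hE₀)⟩

theorem perL_eq_zero_of_mtb_inter_eq_empty (hE : MeasurableSet E)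
    {Ω : Set (EuclideanSpace ℝ (Fin n))} (hΩ : IsPreconnected Ω) (h : mtb n E ∩ Ω = ∅) :
    perL n s E Ω = 0 := by
  have hcover : Ω ⊆ locallyNullSet volume E ∪ locallyNullSet volume Eᶜ := fun x hx =>
    compl_mtb_subset_locallyNullSet_union hE fun hmtb => h.subset ⟨hmtb, hx⟩
  rcases hΩ.subset_or_subset (isOpen_locallyNullSet E) (isOpen_locallyNullSet Eᶜ)
    (disjoint_locallyNullSet_compl E) hcover with hsub | hsub
  · exact interL_eq_zero_of_measure_left (measure_inter_eq_zero_of_subset_locallyNullSet hsub)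
  · exact interL_eq_zero_of_measure_right (measure_inter_eq_zero_of_subset_locallyNullSet hsub)

theorem perL_pos_of_mem_mtb_inter (hE : MeasurableSet E) {Ω : Set (EuclideanSpace ℝ (Fin n))}
    (hΩ : IsOpen Ω) {x : EuclideanSpace ℝ (Fin n)} (hx : x ∈ mtb n E ∩ Ω) :
    0 < perL n s E Ω := by
  obtain ⟨r, hr, hball⟩ := Metric.isOpen_iff.mp hΩ x hx.2
  obtain ⟨hE₀, hEc₀⟩ := (mem_mtb_iff hE).mp hx.1 r hr
  calc 0 < interL n s (E ∩ ball x r) (Eᶜ ∩ ball x r) :=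
        interL_pos (disjoint_compl_right.mono inter_subset_left inter_subset_left) hE₀ hEc₀
    _ ≤ perL n s E Ω :=
        interL_mono (inter_subset_inter_right E hball) (inter_subset_inter_right Eᶜ hball)

end MeasureTheoreticBoundary

theorem perL_eq_zero_of_mtBoundary_inter_empty_general (n : ℕ) (s : ℝ)
    (E : Set (EuclideanSpace ℝ (Fin n))) (hE : MeasurableSet E)
    (Ω : Set (EuclideanSpace ℝ (Fin n))) (hΩ : IsOpen Ω)
    (hconn : IsConnected Ω) :
    (mtb n E ∩ Ω = ∅ → perL n s E Ω = 0) ∧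
      (0 < perL n s E Ω ↔ (mtb n E ∩ Ω).Nonempty) := by
  have hzero (h : mtb n E ∩ Ω = ∅) : perL n s E Ω = 0 :=
    perL_eq_zero_of_mtb_inter_eq_empty hE hconn.isPreconnected h
  refine ⟨hzero, fun hpos => ?_, fun ⟨_, hx⟩ => perL_pos_of_mem_mtb_inter hE hΩ hx⟩
  exact nonempty_iff_ne_empty.mpr fun h => hpos.ne' (hzero h)

/-- If `E` has locally finite `s`-perimeter and `Ω` is a connected open
set with `∂⁻E ∩ Ω = ∅`, then `P_s^L(E,Ω) = 0`; consequently, for connected open `Ω`,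
`P_s^L(E,Ω) > 0` iff `∂⁻E ∩ Ω ≠ ∅`. -/
theorem perL_eq_zero_of_mtBoundary_inter_empty (n : ℕ) (hn : 1 ≤ n) (s : ℝ)
    (hs : s ∈ Set.Ioo (0 : ℝ) 1) (E : Set (EuclideanSpace ℝ (Fin n))) (hE : MeasurableSet E)
    (hloc : locFinPer n s E) (Ω : Set (EuclideanSpace ℝ (Fin n))) (hΩ : IsOpen Ω)
    (hconn : IsConnected Ω) :
    (mtb n E ∩ Ω = ∅ → perL n s E Ω = 0) ∧
      (0 < perL n s E Ω ↔ (mtb n E ∩ Ω).Nonempty) :=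
  perL_eq_zero_of_mtBoundary_inter_empty_general n s E hE Ω hΩ hconn
end

section
/- Let Ω ⊆ ℝⁿ be a bounded open set, E ⊆ ℝⁿ a measurable set with topological boundary ∂E, and r ∈ (0,1). If limsup_{ρ→0⁺} |N̄_ρ^Ω(∂E)| / ρ^r < ∞, then P_s^L(E,Ω) < ∞ for every s ∈ (0,r). -/
open MeasureTheory Metric Set Filter Bornology
open scoped ENNReal Topology

/-- The closed `ρ`-neighborhood of `Γ` relative to `Ω`: `{x ∈ Ω : dist(x,Γ) ≤ ρ}`. -/
def clNbd (n : ℕ) (ρ : ℝ) (Γ Ω : Set (EuclideanSpace ℝ (Fin n))) :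
    Set (EuclideanSpace ℝ (Fin n)) :=
  {x ∈ Ω | Metric.infDist x Γ ≤ ρ}

/-- The upper `r`-dimensional Minkowski content of `Γ` relative to `Ω`:
`limsup_{ρ→0⁺} |N̄_ρ^Ω(Γ)| / ρ^{n-r}`. -/
noncomputable def upMinkContent (n : ℕ) (r : ℝ) (Γ Ω : Set (EuclideanSpace ℝ (Fin n))) : ℝ≥0∞ :=
  Filter.limsup (fun ρ : ℝ => volume (clNbd n ρ Γ Ω) / ENNReal.ofReal (ρ ^ ((n : ℝ) - r)))
    (𝓝[>] 0)

/-- The upper Minkowski dimension of `Γ` relative to `Ω`: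
`sup {r ∈ [0,n] : M̄^r(Γ,Ω) = ∞}`. -/
noncomputable def upMinkDim (n : ℕ) (Γ Ω : Set (EuclideanSpace ℝ (Fin n))) : ℝ :=
  sSup {r : ℝ | r ∈ Set.Icc (0 : ℝ) n ∧ upMinkContent n r Γ Ω = ⊤}

/-! For `x ∈ E` off `∂E`, every `y ∉ E` satisfies `|x - y| ≥ d(x) := dist(x, ∂E)`, because the
segment from `x` to `y` meets `∂E`; summing the kernel over the dyadic shells
`2ᵏ d(x) ≤ |x - y| ≤ 2ᵏ⁺¹ d(x)` bounds the inner integral of `P_s^L(E, Ω)` by `C d(x)^{-s}`.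
The Minkowski bound `|{x ∈ Ω : d(x) ≤ ρ}| ≤ M ρ^r` for small `ρ` makes `∂E ∩ Ω` null, and summing
`d^{-s}` over the dyadic shells `2⁻ᵏ⁻¹ ρ₀ < d ≤ 2⁻ᵏ ρ₀` gives a geometric series of ratio
`2^{-(r-s)} < 1`, so `∫_Ω d^{-s} < ∞`. -/

lemma rpow_mul_pow {c q : ℝ} (hc : 0 ≤ c) (hq : 0 ≤ q) (a : ℝ) (k : ℕ) :
    (c * q ^ k) ^ a = c ^ a * (q ^ a) ^ k := by
  rw [Real.mul_rpow hc (pow_nonneg hq k), Real.rpow_pow_comm hq]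

lemma exists_eventually_le_mul_of_limsup_div_lt_top {β : Type*} {l : Filter β}
    {f g : β → ℝ≥0∞} (hg : ∀ x, g x ≠ ⊤) (h : limsup (fun x => f x / g x) l < ⊤) :
    ∃ M ≠ ⊤, ∀ᶠ x in l, f x ≤ M * g x := by
  obtain ⟨M, hlim, hM⟩ := exists_between h
  refine ⟨M, hM.ne, (eventually_lt_of_limsup_lt hlim).mono fun x hx => ?_⟩
  exact (ENNReal.div_le_iff_le_mul (Or.inr hM.ne) (Or.inl (hg x))).1 hx.le

section Dyadic

variable {α : Type*} [MeasurableSpace α] {μ : Measure α}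

lemma lintegral_iUnion_le_of_le_geometric {s : ℕ → Set α} {f : α → ℝ≥0∞} {A q : ℝ≥0∞}
    (h : ∀ k, ∫⁻ x in s k, f x ∂μ ≤ A * q ^ k) :
    ∫⁻ x in ⋃ k, s k, f x ∂μ ≤ A * (1 - q)⁻¹ :=
  calc ∫⁻ x in ⋃ k, s k, f x ∂μ ≤ ∑' k, ∫⁻ x in s k, f x ∂μ := lintegral_iUnion_le _ _
    _ ≤ ∑' k, A * q ^ k := ENNReal.tsum_le_tsum h
    _ = A * (1 - q)⁻¹ := by rw [ENNReal.tsum_mul_left, ENNReal.tsum_geometric]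

lemma setLIntegral_rpow_neg_le {S : Set α} {D : α → ℝ} {a t : ℝ} (ha : 0 ≤ a) (ht : 0 < t)
    (hD : ∀ x ∈ S, t ≤ D x) :
    ∫⁻ x in S, ENNReal.ofReal (D x ^ (-a)) ∂μ ≤ ENNReal.ofReal (t ^ (-a)) * μ S :=
  calc ∫⁻ x in S, ENNReal.ofReal (D x ^ (-a)) ∂μ ≤ ∫⁻ _ in S, ENNReal.ofReal (t ^ (-a)) ∂μ :=
        setLIntegral_mono measurable_const fun x hx =>
          ENNReal.ofReal_le_ofReal (Real.rpow_le_rpow_of_nonpos ht (hD x hx) (neg_nonpos.2 ha))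
    _ = ENNReal.ofReal (t ^ (-a)) * μ S := setLIntegral_const _ _

lemma setLIntegral_rpow_neg_lt_top_of_measure_le [IsFiniteMeasure μ] (D : α → ℝ) {s r : ℝ}
    {M : ℝ≥0∞} (hs : 0 ≤ s) (hsr : s < r) (hM : M ≠ ⊤)
    (hbd : ∀ᶠ t in 𝓝[>] 0, μ {x | D x ≤ t} ≤ M * ENNReal.ofReal (t ^ r)) :
    ∫⁻ x in {x | 0 < D x}, ENNReal.ofReal (D x ^ (-s)) ∂μ < ⊤ := by
  obtain ⟨ρ₀, hρ₀ : 0 < ρ₀, hbd⟩ := mem_nhdsGT_iff_exists_Ioc_subset.1 hbd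
  set t : ℕ → ℝ := fun k => ρ₀ * 2⁻¹ ^ k
  set q := ENNReal.ofReal ((2⁻¹ : ℝ) ^ (r - s))
  have hq : q < 1 :=
    ENNReal.ofReal_lt_one.2 (Real.rpow_lt_one (by norm_num) (by norm_num) (by linarith))
  have hcover : {x | 0 < D x} ⊆ {x | ρ₀ < D x} ∪ ⋃ k, {x | t (k + 1) < D x ∧ D x ≤ t k} := by
    intro x hx
    rcases lt_or_ge ρ₀ (D x) with h | h
    · exact Or.inl h
    obtain ⟨k, hk1, hk2⟩ := exists_nat_pow_near_of_lt_one (div_pos hx hρ₀)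
      ((div_le_one hρ₀).2 h) (by norm_num : (0 : ℝ) < 2⁻¹) (by norm_num)
    rw [lt_div_iff₀ hρ₀] at hk1
    rw [div_le_iff₀ hρ₀] at hk2
    exact Or.inr (mem_iUnion.2 ⟨k, by simp only [t]; linarith, by simp only [t]; linarith⟩)
  have hshell : ∀ k, ∫⁻ x in {x | t (k + 1) < D x ∧ D x ≤ t k}, ENNReal.ofReal (D x ^ (-s)) ∂μ
      ≤ M * ENNReal.ofReal (ρ₀ ^ (r - s) * (2⁻¹ : ℝ) ^ (-s)) * q ^ k := by
    intro k
    have htk : 0 < t k := by positivity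
    calc ∫⁻ x in {x | t (k + 1) < D x ∧ D x ≤ t k}, ENNReal.ofReal (D x ^ (-s)) ∂μ
        ≤ ENNReal.ofReal (t (k + 1) ^ (-s)) * μ {x | D x ≤ t k} :=
          (setLIntegral_rpow_neg_le hs (by positivity) fun x hx => hx.1.le).trans
            (by gcongr; exact And.right)
      _ ≤ ENNReal.ofReal (t (k + 1) ^ (-s)) * (M * ENNReal.ofReal (t k ^ r)) := by
          gcongr
          exact hbd ⟨htk, mul_le_of_le_one_right hρ₀.le (pow_le_one₀ (by norm_num) (by norm_num))⟩
      _ = M * ENNReal.ofReal (ρ₀ ^ (r - s) * (2⁻¹ : ℝ) ^ (-s)) * q ^ k := by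
          rw [mul_left_comm, ← ENNReal.ofReal_mul (by positivity),
            ← ENNReal.ofReal_pow (by positivity), mul_assoc, ← ENNReal.ofReal_mul (by positivity)]
          congr 2
          have ht_succ : t (k + 1) = t k * 2⁻¹ := by simp only [t]; ring
          rw [ht_succ, Real.mul_rpow htk.le (by norm_num), mul_right_comm, ← Real.rpow_add htk,
            neg_add_eq_sub]
          simp only [t]
          rw [rpow_mul_pow hρ₀.le (by norm_num)]
          ring
  have hq_inv : (1 - q)⁻¹ ≠ ⊤ := ENNReal.inv_ne_top.2 (tsub_pos_of_lt hq).ne'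
  calc ∫⁻ x in {x | 0 < D x}, ENNReal.ofReal (D x ^ (-s)) ∂μ
      ≤ ∫⁻ x in {x | ρ₀ < D x} ∪ ⋃ k, {x | t (k + 1) < D x ∧ D x ≤ t k},
          ENNReal.ofReal (D x ^ (-s)) ∂μ := lintegral_mono_set hcover
    _ ≤ ENNReal.ofReal (ρ₀ ^ (-s)) * μ {x | ρ₀ < D x}
          + M * ENNReal.ofReal (ρ₀ ^ (r - s) * (2⁻¹ : ℝ) ^ (-s)) * (1 - q)⁻¹ :=
        (lintegral_union_le _ _ _).trans (add_le_add
          (setLIntegral_rpow_neg_le hs hρ₀ fun x hx => le_of_lt hx)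
          (lintegral_iUnion_le_of_le_geometric hshell))
    _ < ⊤ := by finiteness

end Dyadic

lemma infDist_frontier_le_dist {F : Type*} [NormedAddCommGroup F] [NormedSpace ℝ F]
    {s : Set F} {x y : F} (hx : x ∈ s) (hy : y ∉ s) : infDist x (frontier s) ≤ dist x y := by
  have : PreconnectedSpace (segment ℝ x y) :=
    isPreconnected_iff_preconnectedSpace.1 (convex_segment x y).isPreconnected
  obtain ⟨z, hz⟩ : (frontier (((↑) : segment ℝ x y → F) ⁻¹' s)).Nonempty :=
    nonempty_frontier_iff.2 ⟨⟨⟨x, left_mem_segment ℝ x y⟩, hx⟩,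
      fun h => hy (h.ge (mem_univ ⟨y, right_mem_segment ℝ x y⟩))⟩
  calc infDist x (frontier s) ≤ dist x z :=
        infDist_le_dist_of_mem (continuous_subtype_val.frontier_preimage_subset s hz)
    _ ≤ dist x y := by
        linarith [dist_add_dist_of_mem_segment z.2, dist_nonneg (x := (z : F)) (y := y)]

lemma exists_setLIntegral_fracKer_le (n : ℕ) {s : ℝ} (hs : 0 < s) :
    ∃ C ≠ ⊤, ∀ (x : EuclideanSpace ℝ (Fin n)) (d : ℝ), 0 < d →
      ∫⁻ y in {y | d ≤ dist x y}, fracKer n s x y ≤ C * ENNReal.ofReal (d ^ (-s)) := by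
  set V := volume (ball (0 : EuclideanSpace ℝ (Fin n)) 1)
  set q := ENNReal.ofReal ((2 : ℝ) ^ (-s))
  have hq : q < 1 :=
    ENNReal.ofReal_lt_one.2 (Real.rpow_lt_one_of_one_lt_of_neg one_lt_two (by linarith))
  refine ⟨ENNReal.ofReal (2 ^ n) * V * (1 - q)⁻¹,
    ENNReal.mul_ne_top (ENNReal.mul_ne_top ENNReal.ofReal_ne_top measure_ball_lt_top.ne)
      (ENNReal.inv_ne_top.2 (tsub_pos_of_lt hq).ne'), fun x d hd => ?_⟩
  set t : ℕ → ℝ := fun k => d * 2 ^ k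
  have ht : ∀ k, 0 < t k := fun k => by positivity
  have hcover : {y | d ≤ dist x y} ⊆ ⋃ k, closedBall x (2 * t k) \ ball x (t k) := by
    intro y hy
    obtain ⟨k, hk1, hk2⟩ := exists_nat_pow_near ((one_le_div hd).2 hy) one_lt_two
    rw [le_div_iff₀ hd] at hk1
    rw [div_lt_iff₀ hd, pow_succ] at hk2
    exact mem_iUnion.2 ⟨k, mem_closedBall'.2 (by linarith),
      fun h => (mem_ball'.1 h).not_ge (by linarith)⟩
  have hshell : ∀ k, ∫⁻ y in closedBall x (2 * t k) \ ball x (t k), fracKer n s x y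
      ≤ ENNReal.ofReal (2 ^ n * d ^ (-s)) * V * q ^ k := by
    intro k
    calc ∫⁻ y in closedBall x (2 * t k) \ ball x (t k), fracKer n s x y
        ≤ ENNReal.ofReal (t k ^ (-((n : ℝ) + s))) * volume (closedBall x (2 * t k)) := by
          refine (setLIntegral_rpow_neg_le (by positivity) (ht k) fun y hy => ?_).trans
            (by gcongr; exact sdiff_subset)
          rw [← dist_eq_norm, dist_comm]
          exact not_lt.1 hy.2
      _ = ENNReal.ofReal (2 ^ n * d ^ (-s) * (2 ^ (-s)) ^ k) * V := by
          rw [Measure.addHaar_closedBall _ _ (by linarith [ht k]), finrank_euclideanSpace_fin,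
            ← mul_assoc, ← ENNReal.ofReal_mul (by positivity)]
          congr 2
          have htk : t k ^ (-((n : ℝ) + s)) = t k ^ (-s) * (t k ^ n)⁻¹ := by
            rw [show -((n : ℝ) + s) = -s - n by ring, Real.rpow_sub (ht k), Real.rpow_natCast,
              div_eq_mul_inv]
          rw [htk, rpow_mul_pow hd.le zero_le_two, mul_pow]
          field_simp [(ht k).ne']
          ring
      _ = ENNReal.ofReal (2 ^ n * d ^ (-s)) * V * q ^ k := by
          rw [ENNReal.ofReal_mul (by positivity), ENNReal.ofReal_pow (by positivity)]
          ring
  calc ∫⁻ y in {y | d ≤ dist x y}, fracKer n s x y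
      ≤ ∫⁻ y in ⋃ k, closedBall x (2 * t k) \ ball x (t k), fracKer n s x y :=
        lintegral_mono_set hcover
    _ ≤ ENNReal.ofReal (2 ^ n * d ^ (-s)) * V * (1 - q)⁻¹ :=
        lintegral_iUnion_le_of_le_geometric hshell
    _ = _ := by rw [ENNReal.ofReal_mul (by positivity)]; ring

lemma measure_inter_eq_zero_of_measure_clNbd_le {n : ℕ} {Γ Ω : Set (EuclideanSpace ℝ (Fin n))}
    {r : ℝ} (hr : 0 < r) {M : ℝ≥0∞} (hM : M ≠ ⊤)
    (h : ∀ᶠ ρ in 𝓝[>] 0, volume (clNbd n ρ Γ Ω) ≤ M * ENNReal.ofReal (ρ ^ r)) :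
    volume (Γ ∩ Ω) = 0 := by
  have hlim : Tendsto (fun ρ : ℝ => M * ENNReal.ofReal (ρ ^ r)) (𝓝[>] 0) (𝓝 0) := by
    have h0 : Tendsto (fun ρ : ℝ => ENNReal.ofReal (ρ ^ r)) (𝓝[>] 0) (𝓝 0) := by
      refine ((ENNReal.continuous_ofReal.comp (Real.continuous_rpow_const hr.le)).tendsto' 0 0
        ?_).mono_left nhdsWithin_le_nhds
      simp [Real.zero_rpow hr.ne']
    simpa using ENNReal.Tendsto.const_mul h0 (Or.inr hM)
  refine le_antisymm (ge_of_tendsto hlim ?_) zero_le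
  filter_upwards [h, self_mem_nhdsWithin] with ρ hρ hpos
  refine (measure_mono fun x hx => ?_).trans hρ
  exact ⟨hx.2, (infDist_zero_of_mem hx.1).trans_le (le_of_lt hpos)⟩

lemma perL_le_mul_setLIntegral_infDist_rpow_neg {n : ℕ} {s : ℝ} {C : ℝ≥0∞} (hC : C ≠ ⊤)
    (hker : ∀ (x : EuclideanSpace ℝ (Fin n)) (d : ℝ), 0 < d →
      ∫⁻ y in {y | d ≤ dist x y}, fracKer n s x y ≤ C * ENNReal.ofReal (d ^ (-s)))
    {E Ω : Set (EuclideanSpace ℝ (Fin n))} (hfr : (frontier E).Nonempty)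
    (hnull : volume (frontier E ∩ Ω) = 0) :
    perL n s E Ω ≤ C * ∫⁻ x in {x | 0 < infDist x (frontier E)},
      ENNReal.ofReal (infDist x (frontier E) ^ (-s)) ∂volume.restrict Ω := by
  set D := fun x => infDist x (frontier E)
  have hDc : Continuous D := continuous_infDist_pt _
  have hD_pos : ∀ x ∈ Ω \ (frontier E ∩ Ω), 0 < D x := fun x hx =>
    (isClosed_frontier.notMem_iff_infDist_pos hfr).1 fun h => hx.2 ⟨h, hx.1⟩
  have hinner : ∀ x ∈ (E ∩ Ω) \ (frontier E ∩ Ω),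
      ∫⁻ y in Eᶜ ∩ Ω, fracKer n s x y ≤ C * ENNReal.ofReal (D x ^ (-s)) := fun x hx =>
    (lintegral_mono_set fun y hy => infDist_frontier_le_dist hx.1.1 hy.1).trans
      (hker x _ (hD_pos x ⟨hx.1.2, hx.2⟩))
  calc perL n s E Ω = ∫⁻ x in (E ∩ Ω) \ (frontier E ∩ Ω), ∫⁻ y in Eᶜ ∩ Ω, fracKer n s x y :=
        (setLIntegral_congr (sdiff_null_ae_eq_self hnull)).symm
    _ ≤ ∫⁻ x in (E ∩ Ω) \ (frontier E ∩ Ω), C * ENNReal.ofReal (D x ^ (-s)) :=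
        setLIntegral_mono (by fun_prop) hinner
    _ ≤ ∫⁻ x in {x | 0 < D x} ∩ Ω, C * ENNReal.ofReal (D x ^ (-s)) :=
        lintegral_mono_set fun x hx => ⟨hD_pos x ⟨hx.1.2, hx.2⟩, hx.1.2⟩
    _ = C * ∫⁻ x in {x | 0 < D x}, ENNReal.ofReal (D x ^ (-s)) ∂volume.restrict Ω := by
        rw [Measure.restrict_restrict (isOpen_lt continuous_const hDc).measurableSet,
          lintegral_const_mul' _ _ hC]

theorem perL_lt_top_of_minkContent_general (n : ℕ) (Ω : Set (EuclideanSpace ℝ (Fin n)))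
    (hΩb : IsBounded Ω) (E : Set (EuclideanSpace ℝ (Fin n))) (r : ℝ)
    (hfin : Filter.limsup
        (fun ρ : ℝ => volume (clNbd n ρ (frontier E) Ω) / ENNReal.ofReal (ρ ^ r))
        (𝓝[>] 0) < ⊤) :
    ∀ s ∈ Set.Ioo (0 : ℝ) r, perL n s E Ω < ⊤ := by
  rintro s ⟨hs, hsr⟩
  obtain hfr | hfr := (frontier E).eq_empty_or_nonempty
  · rcases frontier_eq_empty_iff.1 hfr with rfl | rfl <;> simp [perL, interL]
  obtain ⟨M, hM, hbd⟩ :=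
    exists_eventually_le_mul_of_limsup_div_lt_top (fun _ => ENNReal.ofReal_ne_top) hfin
  obtain ⟨C, hC, hker⟩ := exists_setLIntegral_fracKer_le n hs
  have hnull := measure_inter_eq_zero_of_measure_clNbd_le (hs.trans hsr) hM hbd
  have : IsFiniteMeasure (volume.restrict Ω) := isFiniteMeasure_restrict.2 hΩb.measure_lt_top.ne
  have hint := setLIntegral_rpow_neg_lt_top_of_measure_le (μ := volume.restrict Ω)
    (fun x => infDist x (frontier E)) hs.le hsr hM <| hbd.mono fun ρ hρ => by
      rwa [Measure.restrict_apply
        (isClosed_le (continuous_infDist_pt _) continuous_const).measurableSet, inter_comm]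
  exact (perL_le_mul_setLIntegral_infDist_rpow_neg hC hker hfr hnull).trans_lt
    (ENNReal.mul_lt_top hC.lt_top hint)

/-- If `limsup_{ρ→0⁺} |N̄_ρ^Ω(∂E)|/ρ^r < ∞`, then `P_s^L(E,Ω) < ∞`
for every `s ∈ (0,r)`. -/
theorem perL_lt_top_of_minkContent (n : ℕ) (hn : 1 ≤ n) (Ω : Set (EuclideanSpace ℝ (Fin n)))
    (hΩo : IsOpen Ω) (hΩb : IsBounded Ω) (E : Set (EuclideanSpace ℝ (Fin n)))
    (hE : MeasurableSet E) (r : ℝ) (hr : r ∈ Set.Ioo (0 : ℝ) 1)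
    (hfin : Filter.limsup
        (fun ρ : ℝ => volume (clNbd n ρ (frontier E) Ω) / ENNReal.ofReal (ρ ^ r))
        (𝓝[>] 0) < ⊤) :
    ∀ s ∈ Set.Ioo (0 : ℝ) r, perL n s E Ω < ⊤ :=
  perL_lt_top_of_minkContent_general n Ω hΩb E r hfin
end

section
/- Let n ≥ 1, λ > 1, let a, b be positive integers, and let T_0 ⊆ ℝⁿ be a bounded measurable set with |T_0| > 0. For each integer k ≥ 1 and each 1 ≤ i ≤ a b^{k−1}, let R_k^i be a linear isometry of ℝⁿ and x_k^i ∈ ℝⁿ, define F_k^i(x) := R_k^i(λ^{−k} x) + x_k^i, and set T := ⋃_{k≥1} ⋃_{i=1}^{a b^{k−1}} F_k^i(T_0). Assume |F_k^i(T_0) ∩ F_h^j(T_0)| = 0 whenever (k,i) ≠ (h,j), and assume there exists a measurable set S_0 ⊆ ℝⁿ with |S_0| > 0 such that |F_k^i(S_0) ∩ T| = 0 for every k ≥ 1 and 1 ≤ i ≤ a b^{k−1}. If s ∈ (0,1) satisfies s ≥ n − log b / log λ, then P_s(T) = ∞. -/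
/-!
Shrink `S₀` to a part of positive measure inside a ball `B(0, M)` that also contains `T₀`. A piece
`F_k^i(T₀)` of generation `k` and the set `F_k^i(S₀) \ T ⊆ Tᶜ` then lie within distance `2Mλ^{-k}`
of each other and have volumes `λ^{-kn}|T₀|` and `λ^{-kn}|S₀|`, so their interaction is at least
`(2M)^{-(n+s)} λ^{-k(n-s)} |T₀||S₀| ≥ (2M)^{-(n+s)} b^{-k} |T₀||S₀|`, as `λ^{n-s} ≤ b`. Generation
`k` has `a b^{k-1}` pieces, so it contributes a fixed positive amount to `L_s(T, Tᶜ)`, and since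
the pieces are a.e. disjoint these contributions add up to `∞`.
-/

open MeasureTheory Metric Set Filter Bornology
open scoped ENNReal Topology

open scoped Pointwise

theorem ENNReal.eq_top_of_forall_nat_mul_le {x c : ℝ≥0∞} (hc : c ≠ 0)
    (h : ∀ K : ℕ, K * c ≤ x) : x = ⊤ := by
  rw [← top_le_iff, ← ENNReal.top_mul hc, ← ENNReal.iSup_natCast, ENNReal.iSup_mul]
  exact iSup_le h

theorem exists_pos_subset_ball_measure_inter_ball_ne_zero {X : Type*} [PseudoMetricSpace X]
    [MeasurableSpace X] {μ : Measure X} {A S : Set X} (hA : IsBounded A) (hS : μ S ≠ 0)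
    (x : X) : ∃ M > 0, A ⊆ ball x M ∧ μ (S ∩ ball x M) ≠ 0 := by
  obtain ⟨r, hr⟩ := hA.subset_ball x
  obtain ⟨m, hm⟩ : ∃ m : ℕ, μ (S ∩ ball x m) ≠ 0 := by
    by_contra! h
    refine hS (measure_mono_null ?_ (measure_iUnion_null h))
    rw [← inter_iUnion, iUnion_ball_nat, inter_univ]
  refine ⟨max r m + 1, by positivity, hr.trans (ball_subset_ball (by linarith [le_max_left r m])),
    fun h0 => hm (measure_mono_null (inter_subset_inter_right _ (ball_subset_ball ?_)) h0)⟩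
  linarith [le_max_right r m]

theorem inv_pow_le_rpow_inv_pow {lam b t : ℝ} (hlam : 0 < lam) (hb : lam ^ t ≤ b) (k : ℕ) :
    (b ^ k)⁻¹ ≤ ((lam ^ k)⁻¹) ^ t := by
  have hlamt : 0 < lam ^ t := Real.rpow_pos_of_pos hlam t
  rw [Real.inv_rpow (by positivity), ← Real.rpow_natCast lam, ← Real.rpow_mul hlam.le, mul_comm,
    Real.rpow_mul hlam.le, Real.rpow_natCast]
  exact inv_anti₀ (pow_pos hlamt k) (pow_le_pow_left₀ hlamt.le hb k)

theorem ofReal_mul_le_sum_Icc_mul_pow {a b k : ℕ} (hb : 0 < b) (hk : 1 ≤ k) {D : ℝ}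
    {V : ℝ≥0∞} {f : ℕ → ℝ≥0∞}
    (hf : ∀ i, 1 ≤ i → i ≤ a * b ^ (k - 1) → ENNReal.ofReal (D * ((b : ℝ) ^ k)⁻¹) * V ≤ f i) :
    ENNReal.ofReal (a * D / b) * V ≤ ∑ i ∈ Finset.Icc 1 (a * b ^ (k - 1)), f i := by
  have hcount : ((a * b ^ (k - 1) : ℕ) : ℝ) * (D * ((b : ℝ) ^ k)⁻¹) = a * D / b := by
    obtain ⟨j, rfl⟩ := Nat.exists_eq_add_of_le' hk
    have : (b : ℝ) ≠ 0 := by positivity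
    simp only [Nat.add_sub_cancel, Nat.cast_mul, Nat.cast_pow, pow_succ]
    field_simp
  calc ENNReal.ofReal (a * D / b) * V
      = ∑ _i ∈ Finset.Icc 1 (a * b ^ (k - 1)), ENNReal.ofReal (D * ((b : ℝ) ^ k)⁻¹) * V := by
        rw [Finset.sum_const, Nat.card_Icc, Nat.add_sub_cancel, nsmul_eq_mul, ← mul_assoc,
          ← ENNReal.ofReal_natCast, ← ENNReal.ofReal_mul (by positivity), hcount]
    _ ≤ ∑ i ∈ Finset.Icc 1 (a * b ^ (k - 1)), f i := Finset.sum_le_sum fun i hi => by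
        rw [Finset.mem_Icc] at hi
        exact hf i hi.1 hi.2

section Similarity

variable {E : Type*} [NormedAddCommGroup E] [InnerProductSpace ℝ E]

def similarity (R : E →ₗᵢ[ℝ] E) (r : ℝ) (c : E) (x : E) : E := R (r • x) + c

theorem norm_similarity_sub (R : E →ₗᵢ[ℝ] E) (r : ℝ) (c x y : E) :
    ‖similarity R r c x - similarity R r c y‖ = |r| * ‖x - y‖ := by
  simp only [similarity, add_sub_add_right_eq_sub, ← map_sub, ← smul_sub, R.norm_map, norm_smul,
    Real.norm_eq_abs]

variable [FiniteDimensional ℝ E]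

theorem similarity_image_eq (R : E →ₗᵢ[ℝ] E) (r : ℝ) (c : E) (A : Set E) :
    similarity R r c '' A = (· + c) '' (R.toLinearIsometryEquiv rfl '' (r • A)) := by
  rw [← image_smul, image_image, image_image]
  rfl

variable [MeasurableSpace E] [BorelSpace E]

theorem MeasurableSet.similarity_image (R : E →ₗᵢ[ℝ] E) (r : ℝ) (c : E) {A : Set E}
    (hA : MeasurableSet A) : MeasurableSet (similarity R r c '' A) := by
  rw [similarity_image_eq, image_add_right]
  refine MeasurableSet.preimage ?_ (measurable_add_const _)
  rw [LinearIsometryEquiv.image_eq_preimage_symm]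
  exact (hA.const_smul₀ r).preimage (LinearIsometryEquiv.continuous _).measurable

theorem volume_similarity_image (R : E →ₗᵢ[ℝ] E) (r : ℝ) (c : E) (A : Set E) :
    volume (similarity R r c '' A) = ENNReal.ofReal (|r| ^ Module.finrank ℝ E) * volume A := by
  rw [similarity_image_eq, image_add_right, measure_preimage_add_right,
    LinearIsometryEquiv.image_eq_preimage_symm,
    (LinearIsometryEquiv.measurePreserving _).measure_preimage_emb
      (LinearIsometryEquiv.toHomeomorph _).measurableEmbedding,
    Measure.addHaar_smul, abs_pow]

end Similarity

section Interaction

variable {n : ℕ} {s : ℝ}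

theorem interL_mono_right {A B B' : Set (EuclideanSpace ℝ (Fin n))} (h : B ⊆ B') :
    interL n s A B ≤ interL n s A B' :=
  lintegral_mono fun _ => lintegral_mono_set h

theorem ofReal_rpow_mul_volume_mul_volume_le_interL (hns : 0 < n + s) {d : ℝ}
    {A B : Set (EuclideanSpace ℝ (Fin n))} (hA : MeasurableSet A) (hAB : Disjoint A B)
    (hd : ∀ x ∈ A, ∀ y ∈ B, ‖x - y‖ ≤ d) :
    ENNReal.ofReal (d ^ (-(n + s))) * volume A * volume B ≤ interL n s A B := by
  have hker : ∀ x ∈ A, ∀ y ∈ B, ENNReal.ofReal (d ^ (-(n + s))) ≤ fracKer n s x y := by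
    intro x hx y hy
    -- `Disjoint` keeps `x ≠ y`: on the diagonal the kernel is the junk value `0 ^ (-(n + s)) = 0`.
    have hxy : 0 < ‖x - y‖ := norm_pos_iff.2 (sub_ne_zero.2 (hAB.ne_of_mem hx hy))
    exact ENNReal.ofReal_le_ofReal (Real.rpow_le_rpow_of_nonpos hxy (hd x hx y hy) (by linarith))
  have hinner : ∀ x ∈ A, ENNReal.ofReal (d ^ (-(n + s))) * volume B ≤
      ∫⁻ y in B, fracKer n s x y := fun x hx => by
    rw [← setLIntegral_const]
    exact setLIntegral_mono (by unfold fracKer; fun_prop) (hker x hx)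
  calc ENNReal.ofReal (d ^ (-(n + s))) * volume A * volume B
      = ∫⁻ _ in A, ENNReal.ofReal (d ^ (-(n + s))) * volume B := by
        rw [setLIntegral_const, mul_right_comm]
    _ ≤ interL n s A B := setLIntegral_mono' hA hinner

theorem sum_interL_le {ι : Type*} (σ : Finset ι) {A : ι → Set (EuclideanSpace ℝ (Fin n))}
    (hA : ∀ i ∈ σ, MeasurableSet (A i))
    (hdisj : (σ : Set ι).Pairwise fun i j => AEDisjoint volume (A i) (A j))
    {T : Set (EuclideanSpace ℝ (Fin n))} (hAT : ∀ i ∈ σ, A i ⊆ T)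
    (B : Set (EuclideanSpace ℝ (Fin n))) :
    ∑ i ∈ σ, interL n s (A i) B ≤ interL n s T B := by
  simp only [interL]
  rw [← lintegral_biUnion_finset₀ hdisj fun i hi => (hA i hi).nullMeasurableSet]
  exact lintegral_mono_set (iUnion₂_subset hAT)

theorem interL_eq_top_of_le_sum_levels {N : ℕ → ℕ}
    {A : ℕ → ℕ → Set (EuclideanSpace ℝ (Fin n))} {T : Set (EuclideanSpace ℝ (Fin n))}
    (hA : ∀ k i, MeasurableSet (A k i)) (hAT : ∀ k i, 1 ≤ k → 1 ≤ i → i ≤ N k → A k i ⊆ T)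
    (hdisj : ∀ k h i j : ℕ, 1 ≤ k → 1 ≤ h → 1 ≤ i → i ≤ N k → 1 ≤ j → j ≤ N h →
      (k, i) ≠ (h, j) → volume (A k i ∩ A h j) = 0)
    (B : Set (EuclideanSpace ℝ (Fin n))) {c : ℝ≥0∞} (hc : c ≠ 0)
    (hlevel : ∀ k, 1 ≤ k → c ≤ ∑ i ∈ Finset.Icc 1 (N k), interL n s (A k i) B) :
    interL n s T B = ⊤ := by
  refine ENNReal.eq_top_of_forall_nat_mul_le hc fun K => ?_
  set σ := (Finset.Icc 1 K).sigma fun k => Finset.Icc 1 (N k)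
  have hmem : ∀ p ∈ σ, 1 ≤ p.1 ∧ 1 ≤ p.2 ∧ p.2 ≤ N p.1 := fun p hp => by
    simp only [σ, Finset.mem_sigma, Finset.mem_Icc] at hp
    omega
  have hσdisj : (σ : Set ((_ : ℕ) × ℕ)).Pairwise fun p q =>
      AEDisjoint volume (A p.1 p.2) (A q.1 q.2) := by
    rintro ⟨k, i⟩ hp ⟨h, j⟩ hq hne
    obtain ⟨hk, hi, hiN⟩ := hmem _ hp
    obtain ⟨hh, hj, hjN⟩ := hmem _ hq
    refine hdisj k h i j hk hh hi hiN hj hjN fun heq => hne ?_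
    simp_all
  calc (K : ℝ≥0∞) * c = ∑ _k ∈ Finset.Icc 1 K, c := by simp
    _ ≤ ∑ k ∈ Finset.Icc 1 K, ∑ i ∈ Finset.Icc 1 (N k), interL n s (A k i) B :=
        Finset.sum_le_sum fun k hk => hlevel k (Finset.mem_Icc.1 hk).1
    _ = ∑ p ∈ σ, interL n s (A p.1 p.2) B := Finset.sum_sigma' _ _ _
    _ ≤ interL n s T B := sum_interL_le σ (fun p _ => hA _ _) hσdisj
        (fun p hp => hAT _ _ (hmem p hp).1 (hmem p hp).2.1 (hmem p hp).2.2) B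

theorem ofReal_mul_le_interL_similarity_image_compl {M r : ℝ} (hns : 0 < n + s)
    (hM : 0 ≤ M) (hr : 0 < r) (R : EuclideanSpace ℝ (Fin n) →ₗᵢ[ℝ] EuclideanSpace ℝ (Fin n))
    (c : EuclideanSpace ℝ (Fin n)) {T0 S E : Set (EuclideanSpace ℝ (Fin n))}
    (hT0 : MeasurableSet T0) (hT0M : T0 ⊆ ball 0 M) (hSM : S ⊆ ball 0 M)
    (hT0E : similarity R r c '' T0 ⊆ E) (hSE : volume (similarity R r c '' S ∩ E) = 0) :
    ENNReal.ofReal ((2 * M) ^ (-(n + s)) * r ^ (n - s)) * (volume T0 * volume S) ≤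
      interL n s (similarity R r c '' T0) Eᶜ := by
  set F := similarity R r c
  have hdist : ∀ x ∈ F '' T0, ∀ y ∈ F '' S \ E, ‖x - y‖ ≤ r * (2 * M) := by
    rintro _ ⟨u, hu, rfl⟩ _ ⟨⟨v, hv, rfl⟩, -⟩
    rw [norm_similarity_sub, abs_of_pos hr]
    have hu' := mem_ball_zero_iff.1 (hT0M hu)
    have hv' := mem_ball_zero_iff.1 (hSM hv)
    gcongr
    linarith [norm_sub_le u v]
  have hvol : ∀ A, volume (F '' A) = ENNReal.ofReal (r ^ n) * volume A := fun A => by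
    rw [volume_similarity_image, finrank_euclideanSpace_fin, abs_of_pos hr]
  have hexp :
      (2 * M) ^ (-(n + s)) * r ^ (n - s) = (r * (2 * M)) ^ (-(n + s)) * r ^ n * r ^ n := by
    have hr_exp : r ^ (n - s) = r ^ (-(n + s)) * r ^ (n : ℝ) * r ^ (n : ℝ) := by
      rw [← Real.rpow_add hr, ← Real.rpow_add hr]
      ring_nf
    rw [hr_exp, Real.mul_rpow hr.le (by positivity), Real.rpow_natCast]
    ring
  calc ENNReal.ofReal ((2 * M) ^ (-(n + s)) * r ^ (n - s)) * (volume T0 * volume S)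
      = ENNReal.ofReal ((r * (2 * M)) ^ (-(n + s))) * volume (F '' T0) * volume (F '' S \ E) := by
        rw [measure_sdiff_null' hSE, hvol, hvol, hexp, ENNReal.ofReal_mul (by positivity),
          ENNReal.ofReal_mul (by positivity)]
        ring
    _ ≤ interL n s (F '' T0) (F '' S \ E) :=
        ofReal_rpow_mul_volume_mul_volume_le_interL hns (hT0.similarity_image R r c)
          (disjoint_sdiff_right.mono_left hT0E) hdist
    _ ≤ interL n s (F '' T0) Eᶜ := interL_mono_right fun _ hy => hy.2

end Interaction

theorem perG_eq_top_selfSimilar_general (n : ℕ) (lam : ℝ) (hlam : 1 < lam)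
    (a b : ℕ) (ha : 0 < a) (hb : 0 < b)
    (T0 : Set (EuclideanSpace ℝ (Fin n))) (hT0m : MeasurableSet T0) (hT0b : IsBounded T0)
    (hT0pos : 0 < volume T0)
    (R : ℕ → ℕ → (EuclideanSpace ℝ (Fin n) →ₗᵢ[ℝ] EuclideanSpace ℝ (Fin n)))
    (c : ℕ → ℕ → EuclideanSpace ℝ (Fin n))
    (F : ℕ → ℕ → EuclideanSpace ℝ (Fin n) → EuclideanSpace ℝ (Fin n))
    (hF : ∀ k i x, F k i x = R k i ((lam ^ k)⁻¹ • x) + c k i)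
    (T : Set (EuclideanSpace ℝ (Fin n)))
    (hT : T = ⋃ (k : ℕ) (_ : 1 ≤ k) (i : ℕ) (_ : 1 ≤ i) (_ : i ≤ a * b ^ (k - 1)),
        F k i '' T0)
    (hdisj : ∀ k h i j : ℕ, 1 ≤ k → 1 ≤ h → 1 ≤ i → i ≤ a * b ^ (k - 1) →
        1 ≤ j → j ≤ a * b ^ (h - 1) → (k, i) ≠ (h, j) →
        volume (F k i '' T0 ∩ F h j '' T0) = 0)
    (S0 : Set (EuclideanSpace ℝ (Fin n)))
    (hS0pos : 0 < volume S0)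
    (hS0 : ∀ k i : ℕ, 1 ≤ k → 1 ≤ i → i ≤ a * b ^ (k - 1) →
        volume (F k i '' S0 ∩ T) = 0)
    (s : ℝ) (hs : s ∈ Set.Ioo (0 : ℝ) 1)
    (hsd : (n : ℝ) - Real.log b / Real.log lam ≤ s) :
    perG n s T = ⊤ := by
  obtain rfl : F = fun k i => similarity (R k i) (lam ^ k)⁻¹ (c k i) := by
    funext k i x
    exact hF k i x
  have hns : 0 < n + s := add_pos_of_nonneg_of_pos n.cast_nonneg hs.1
  have hlam0 : 0 < lam := by linarith
  have hlamb : lam ^ (n - s) ≤ b :=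
    (Real.le_logb_iff_rpow_le hlam (by positivity)).1 (by rw [Real.logb]; linarith)
  obtain ⟨M, hM, hT0M, hSM⟩ := exists_pos_subset_ball_measure_inter_ball_ne_zero hT0b hS0pos.ne' 0
  have hpiece : ∀ k i, 1 ≤ k → 1 ≤ i → i ≤ a * b ^ (k - 1) →
      similarity (R k i) (lam ^ k)⁻¹ (c k i) '' T0 ⊆ T := fun k i hk hi hiN x hx => by
    rw [hT]
    exact mem_iUnion₂.2 ⟨k, hk, mem_iUnion₂.2 ⟨i, hi, mem_iUnion.2 ⟨hiN, hx⟩⟩⟩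
  refine interL_eq_top_of_le_sum_levels (N := fun k => a * b ^ (k - 1))
    (fun k i => hT0m.similarity_image _ _ _) hpiece hdisj Tᶜ
    (c := ENNReal.ofReal (a * (2 * M) ^ (-(n + s)) / b) * (volume T0 * volume (S0 ∩ ball 0 M)))
    (mul_ne_zero (by positivity) (mul_ne_zero hT0pos.ne' hSM)) fun k hk => ?_
  refine ofReal_mul_le_sum_Icc_mul_pow hb hk fun i hi hiN => le_trans ?_
    (ofReal_mul_le_interL_similarity_image_compl (S := S0 ∩ ball 0 M) hns hM.le (by positivity)
      (R k i) (c k i) hT0m hT0M inter_subset_right (hpiece k i hk hi hiN)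
      (measure_mono_null (inter_subset_inter_left _ (image_mono inter_subset_left))
        (hS0 k i hk hi hiN)))
  gcongr
  exact inv_pow_le_rpow_inv_pow hlam0 hlamb k

/-- Let `T` be the union of the sets `F_k^i(T₀)`, `k ≥ 1`,
`1 ≤ i ≤ a b^{k-1}`, with `|T₀| > 0`, the pieces pairwise a.e. disjoint, and suppose
there is a set `S₀` with `|S₀| > 0` such that each `F_k^i(S₀)` is a.e. disjoint
from `T`. If `s ∈ (0,1)` with `s ≥ n - log b / log λ`, then `P_s(T) = ∞`. -/
theorem perG_eq_top_selfSimilar (n : ℕ) (hn : 1 ≤ n) (lam : ℝ) (hlam : 1 < lam)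
    (a b : ℕ) (ha : 0 < a) (hb : 0 < b)
    (T0 : Set (EuclideanSpace ℝ (Fin n))) (hT0m : MeasurableSet T0) (hT0b : IsBounded T0)
    (hT0pos : 0 < volume T0)
    (R : ℕ → ℕ → (EuclideanSpace ℝ (Fin n) →ₗᵢ[ℝ] EuclideanSpace ℝ (Fin n)))
    (c : ℕ → ℕ → EuclideanSpace ℝ (Fin n))
    (F : ℕ → ℕ → EuclideanSpace ℝ (Fin n) → EuclideanSpace ℝ (Fin n))
    (hF : ∀ k i x, F k i x = R k i ((lam ^ k)⁻¹ • x) + c k i)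
    (T : Set (EuclideanSpace ℝ (Fin n)))
    (hT : T = ⋃ (k : ℕ) (_ : 1 ≤ k) (i : ℕ) (_ : 1 ≤ i) (_ : i ≤ a * b ^ (k - 1)),
        F k i '' T0)
    (hdisj : ∀ k h i j : ℕ, 1 ≤ k → 1 ≤ h → 1 ≤ i → i ≤ a * b ^ (k - 1) →
        1 ≤ j → j ≤ a * b ^ (h - 1) → (k, i) ≠ (h, j) →
        volume (F k i '' T0 ∩ F h j '' T0) = 0)
    (S0 : Set (EuclideanSpace ℝ (Fin n))) (hS0m : MeasurableSet S0)
    (hS0pos : 0 < volume S0)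
    (hS0 : ∀ k i : ℕ, 1 ≤ k → 1 ≤ i → i ≤ a * b ^ (k - 1) →
        volume (F k i '' S0 ∩ T) = 0)
    (s : ℝ) (hs : s ∈ Set.Ioo (0 : ℝ) 1)
    (hsd : (n : ℝ) - Real.log b / Real.log lam ≤ s) :
    perG n s T = ⊤ :=
  perG_eq_top_selfSimilar_general n lam hlam a b ha hb T0 hT0m hT0b hT0pos R c F hF T hT hdisj S0
    hS0pos hS0 s hs hsd
end
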